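/- arXiv:2410.08426 — 2 statements merged into one kernel-verified Lean document; each statement's English description precedes it below -/
import Mathlib

section
/- Suppose (H,V) and (Y,U) are matrix solutions of the Jacobi system with Y(0) = 0, U(0) = I, H(−1) = 0, det H(t) ≠ 0 for t > −1 and det Y(t) ≠ 0 for t > 0, both with Lagrangian images, and with Wronskian Y*V − U*H ≡ −I. Then for all t > 0: [∫₀^t H^{-1} B (H*)^{-1} ds] · [D − ∫₁^t Y^{-1} B (Y*)^{-1} ds] = I, where D = Y(1)^{-1} H(1); in particular the increasing family of symmetric matrices ∫₁^t Y^{-1} B (Y*)^{-1} ds is bounded above by D and converges as t → +∞. -/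
open Matrix Filter Topology

/-!
The Lagrangian and Wronskian conditions give `(Hᵀ)⁻¹ = U - V H⁻¹ Y` and `(Yᵀ)⁻¹ = U Y⁻¹ H - V`,
so differentiating with the first Jacobi equation (in which `A` cancels) yields
`(H⁻¹ Y)' = H⁻¹ B (Hᵀ)⁻¹` and `(Y⁻¹ H)' = -Y⁻¹ B (Yᵀ)⁻¹`. Hence, as `Y 0 = 0`,
`∫₀ᵗ H⁻¹ B (Hᵀ)⁻¹ = H(t)⁻¹ Y(t)` and `D - ∫₁ᵗ Y⁻¹ B (Yᵀ)⁻¹ = Y(t)⁻¹ H(t)`, which are inverse to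
each other. Both integrands are positive definite, so the second family increases and stays below
`D`, its gap to `D` being the inverse of a positive definite matrix; it converges because its
quadratic forms converge monotonically, and polarization recovers the entries.
-/

open MeasureTheory Set

namespace Matrix

variable {m : Type*}

section Calculus

/- `HasDerivAt` only sees the topology, which every matrix norm induces; the `L∞` operator norm
makes the matrices a Banach algebra, so that the derivative of `Ring.inverse` is available. -/
attribute [local instance] Matrix.linftyOpNormedRing Matrix.linftyOpNormedAlgebra

variable [Fintype m] [DecidableEq m]

theorem hasDerivAt_iff_forall_entry {M : ℝ → Matrix m m ℝ} {M' : Matrix m m ℝ} {t : ℝ} :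
    HasDerivAt M M' t ↔ ∀ i j, HasDerivAt (fun s => M s i j) (M' i j) t := by
  refine hasDerivAt_iff_tendsto_slope.trans ?_
  simp only [hasDerivAt_iff_tendsto_slope]
  exact tendsto_pi_nhds.trans (forall_congr' fun i => tendsto_pi_nhds)

theorem _root_.HasDerivAt.matrix_inv {M : ℝ → Matrix m m ℝ} {M' : Matrix m m ℝ} {t : ℝ}
    (h : HasDerivAt M M' t) (hM : IsUnit (M t).det) :
    HasDerivAt (fun s => (M s)⁻¹) (-((M t)⁻¹ * M' * (M t)⁻¹)) t := by
  obtain ⟨u, hu⟩ := (isUnit_iff_isUnit_det _).2 hM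
  have hinv := hasFDerivAt_ringInverse (𝕜 := ℝ) u
  rw [hu] at hinv
  simp_rw [nonsing_inv_eq_ringInverse]
  refine (hinv.comp_hasDerivAt t h).congr_deriv ?_
  simp [← hu, Matrix.mul_assoc]

theorem _root_.HasDerivAt.matrix_inv_mul {X Z : ℝ → Matrix m m ℝ} {X' Z' : Matrix m m ℝ} {t : ℝ}
    (hX : HasDerivAt X X' t) (hZ : HasDerivAt Z Z' t) (hXt : IsUnit (X t).det) :
    HasDerivAt (fun s => (X s)⁻¹ * Z s) ((X t)⁻¹ * (Z' - X' * ((X t)⁻¹ * Z t))) t := by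
  refine ((hX.matrix_inv hXt).mul hZ).congr_deriv ?_
  simp only [Matrix.mul_sub, Matrix.neg_mul, Matrix.mul_assoc]
  abel

theorem of_intervalIntegral_eq_sub_of_hasDerivAt {M M' : ℝ → Matrix m m ℝ} {a b : ℝ}
    (hderiv : ∀ x ∈ uIcc a b, HasDerivAt M (M' x) x) (hcont : ContinuousOn M' (uIcc a b)) :
    (of fun i j => ∫ s in a..b, M' s i j) = M b - M a := by
  ext i j
  exact intervalIntegral.integral_eq_sub_of_hasDerivAt
    (fun x hx => hasDerivAt_iff_forall_entry.1 (hderiv x hx) i j)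
    ((continuous_apply_apply i j).comp_continuousOn hcont).intervalIntegrable

end Calculus

section Continuity

variable [Fintype m] [DecidableEq m] {α : Type*} [TopologicalSpace α] {X B : α → Matrix m m ℝ}
  {S : Set α}

theorem _root_.ContinuousOn.matrix_inv (hX : ContinuousOn X S)
    (hXS : ∀ s ∈ S, IsUnit (X s).det) : ContinuousOn (fun s => (X s)⁻¹) S := fun s hs =>
  (continuousAt_matrix_inv _ ((Ring.inverse_eq_inv' (G₀ := ℝ)) ▸
    continuousAt_inv₀ (hXS s hs).ne_zero)).comp_continuousWithinAt (hX s hs)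

theorem _root_.ContinuousOn.inv_mul_mul_transpose_inv (hX : ContinuousOn X S)
    (hB : ContinuousOn B S) (hXS : ∀ s ∈ S, IsUnit (X s).det) :
    ContinuousOn (fun s => (X s)⁻¹ * B s * ((X s)ᵀ)⁻¹) S :=
  ((hX.matrix_inv hXS).mul hB).mul <|
    (continuous_id.matrix_transpose.comp_continuousOn hX).matrix_inv fun s hs => by
      simpa [det_transpose] using hXS s hs

end Continuity

theorem PosDef.inv_mul_mul_transpose_inv [Fintype m] [DecidableEq m] {B X : Matrix m m ℝ}
    (hB : B.PosDef) (hX : IsUnit X.det) : (X⁻¹ * B * Xᵀ⁻¹).PosDef := by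
  rw [← transpose_nonsing_inv, ← conjTranspose_eq_transpose_of_trivial]
  exact hB.mul_mul_conjTranspose_same
    (vecMul_injective_iff_isUnit.2 ((isUnit_nonsing_inv_iff).2 ((isUnit_iff_isUnit_det X).2 hX)))

theorem transpose_mul_sub_mul_inv_mul [Fintype m] [DecidableEq m] {R : Type*} [CommRing R]
    {X P Z W : Matrix m m R} (hX : IsUnit X.det) (hXP : (Xᵀ * P)ᵀ = Xᵀ * P) :
    Xᵀ * (W - P * (X⁻¹ * Z)) = Xᵀ * W - Pᵀ * Z := by
  rw [Matrix.mul_sub, ← Matrix.mul_assoc, ← hXP, transpose_mul, transpose_transpose,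
    Matrix.mul_assoc, mul_nonsing_inv_cancel_left _ _ hX]

section Integral

variable {F : ℝ → Matrix m m ℝ} {a b : ℝ}

theorem isHermitian_of_intervalIntegral (hF : ∀ s ∈ uIcc a b, (F s).IsHermitian) :
    (of fun i j => ∫ s in a..b, F s i j).IsHermitian := by
  ext i j
  simp only [conjTranspose_apply, of_apply, star_trivial]
  exact intervalIntegral.integral_congr fun s hs => (hF s hs).apply i j

theorem dotProduct_mulVec_of_intervalIntegral [Fintype m]
    (hF : ∀ i j, IntervalIntegrable (fun s => F s i j) volume a b) (x y : m → ℝ) :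
    x ⬝ᵥ (of (fun i j => ∫ s in a..b, F s i j) *ᵥ y) = ∫ s in a..b, x ⬝ᵥ (F s *ᵥ y) := by
  simp only [dotProduct, mulVec, of_apply, Finset.mul_sum]
  have hterm : ∀ i j, IntervalIntegrable (fun s => x i * (F s i j * y j)) volume a b :=
    fun i j => ((hF i j).mul_const _).const_mul _
  rw [intervalIntegral.integral_finsetSum (f := fun i s => ∑ j, x i * (F s i j * y j))
    fun i _ => by simpa only [Finset.sum_fn] using IntervalIntegrable.sum _ fun j _ => hterm i j]
  refine Finset.sum_congr rfl fun i _ => ?_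
  rw [intervalIntegral.integral_finsetSum (f := fun j s => x i * (F s i j * y j))
    fun j _ => hterm i j]
  refine Finset.sum_congr rfl fun j _ => ?_
  rw [intervalIntegral.integral_const_mul, intervalIntegral.integral_mul_const]

theorem posDef_of_intervalIntegral [Fintype m] (hab : a < b) (hF : ContinuousOn F (Icc a b))
    (hpos : ∀ s ∈ Icc a b, (F s).PosDef) :
    (of fun i j => ∫ s in a..b, F s i j).PosDef := by
  rw [← uIcc_of_le hab.le] at hF hpos
  have hFint : ∀ i j, IntervalIntegrable (fun s => F s i j) volume a b := fun i j =>
    ((continuous_apply_apply i j).comp_continuousOn hF).intervalIntegrable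
  refine .of_dotProduct_mulVec_pos (isHermitian_of_intervalIntegral fun s hs => (hpos s hs).1)
    fun x hx => ?_
  rw [star_trivial, dotProduct_mulVec_of_intervalIntegral hFint]
  refine intervalIntegral.intervalIntegral_pos_of_pos_on ?_ (fun s hs => ?_) hab
  · exact ((continuous_const.dotProduct (continuous_id.matrix_mulVec continuous_const))
      |>.comp_continuousOn hF).intervalIntegrable
  · have hs' : s ∈ uIcc a b := by rw [uIcc_of_le hab.le]; exact Ioo_subset_Icc_self hs
    simpa using (hpos s hs').dotProduct_mulVec_pos hx

end Integral

section Convergence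

variable [Fintype m] [DecidableEq m]

theorem IsHermitian.apply_eq_half_sub_dotProduct_mulVec {M : Matrix m m ℝ} (hM : M.IsHermitian)
    (i j : m) :
    M i j = ((Pi.single i 1 + Pi.single j 1) ⬝ᵥ (M *ᵥ (Pi.single i 1 + Pi.single j 1))
      - Pi.single i 1 ⬝ᵥ (M *ᵥ Pi.single i 1) - Pi.single j 1 ⬝ᵥ (M *ᵥ Pi.single j 1)) / 2 := by
  have hji : M j i = M i j := by simpa using hM.apply i j
  simp only [mulVec_add, add_dotProduct, dotProduct_add, mulVec_single_one,
    single_one_dotProduct, col_apply, hji]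
  ring

open scoped MatrixOrder in
theorem exists_tendsto_of_monotone_of_le {ι : Type*} [SemilatticeSup ι] [Nonempty ι]
    {F : ι → Matrix m m ℝ} {D : Matrix m m ℝ} (hF : ∀ i, (F i).IsHermitian)
    (hmono : Monotone F) (hD : ∀ i, F i ≤ D) :
    ∃ L, Tendsto F atTop (𝓝 L) := by
  have hquad : ∀ x : m → ℝ, ∃ l, Tendsto (fun i => x ⬝ᵥ (F i *ᵥ x)) atTop (𝓝 l) := by
    intro x
    have hle : ∀ {M N : Matrix m m ℝ}, M ≤ N → x ⬝ᵥ (M *ᵥ x) ≤ x ⬝ᵥ (N *ᵥ x) := fun h => by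
      simpa [sub_mulVec] using (le_iff.1 h).dotProduct_mulVec_nonneg x
    exact ⟨_, tendsto_atTop_ciSup (fun i j hij => hle (hmono hij))
      ⟨x ⬝ᵥ (D *ᵥ x), forall_mem_range.2 fun i => hle (hD i)⟩⟩
  choose l hl using hquad
  refine ⟨of fun i j => (l (Pi.single i 1 + Pi.single j 1) - l (Pi.single i 1)
    - l (Pi.single j 1)) / 2, tendsto_pi_nhds.2 fun i => tendsto_pi_nhds.2 fun j => ?_⟩
  simp_rw [(hF _).apply_eq_half_sub_dotProduct_mulVec i j]
  exact (((hl _).sub (hl _)).sub (hl _)).div_const 2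

open scoped MatrixOrder in
theorem exists_tendsto_atTop_of_posDef_sub {F : ℝ → Matrix m m ℝ} {D : Matrix m m ℝ} {t₀ : ℝ}
    (hF : ∀ t > t₀, (F t).IsHermitian) (hmono : ∀ s t, t₀ < s → s < t → (F t - F s).PosDef)
    (hD : ∀ t > t₀, (D - F t).PosDef) :
    ∃ L, Tendsto F atTop (𝓝 L) := by
  have hmax : ∀ t, t₀ < max t (t₀ + 1) := fun t => lt_max_of_lt_right (lt_add_one t₀)
  obtain ⟨L, hL⟩ := exists_tendsto_of_monotone_of_le (F := fun t => F (max t (t₀ + 1)))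
    (fun t => hF _ (hmax t))
    (fun s t hst => le_iff.2 <| by
      rcases (max_le_max_right (t₀ + 1) hst).eq_or_lt with heq | hlt
      · simp only [heq, sub_self, PosSemidef.zero]
      · exact (hmono _ _ (hmax s) hlt).posSemidef)
    fun t => le_iff.2 (hD _ (hmax t)).posSemidef
  exact ⟨L, hL.congr' ((eventually_ge_atTop (t₀ + 1)).mono fun t ht => by
    simp only [max_eq_left ht])⟩

end Convergence

end Matrix

section Jacobi

attribute [local instance] Matrix.linftyOpNormedRing Matrix.linftyOpNormedAlgebra

variable {m : Type*} [Fintype m] [DecidableEq m] {A B X P Z W : ℝ → Matrix m m ℝ}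

theorem hasDerivAt_inv_mul_of_wronskian_eq_one {t : ℝ}
    (hX : HasDerivAt X (A t * X t + B t * P t) t) (hZ : HasDerivAt Z (A t * Z t + B t * W t) t)
    (hXt : IsUnit (X t).det) (hlag : ((X t)ᵀ * P t)ᵀ = (X t)ᵀ * P t)
    (hwr : (X t)ᵀ * W t - (P t)ᵀ * Z t = 1) :
    HasDerivAt (fun s => (X s)⁻¹ * Z s) ((X t)⁻¹ * B t * ((X t)ᵀ)⁻¹) t := by
  have hinv : ((X t)ᵀ)⁻¹ = W t - P t * ((X t)⁻¹ * Z t) :=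
    inv_eq_right_inv (by rw [transpose_mul_sub_mul_inv_mul hXt hlag, hwr])
  refine (hX.matrix_inv_mul hZ hXt).congr_deriv ?_
  rw [hinv, Matrix.add_mul, Matrix.mul_assoc (A t), mul_nonsing_inv_cancel_left _ _ hXt]
  simp only [Matrix.mul_sub, Matrix.mul_add, Matrix.mul_assoc]
  abel

variable {a b : ℝ}

theorem of_intervalIntegral_inv_mul_mul_transpose_inv_eq_sub_of_wronskian_eq_one
    (hB : Continuous B)
    (hX : ∀ s ∈ uIcc a b, HasDerivAt X (A s * X s + B s * P s) s)
    (hZ : ∀ s ∈ uIcc a b, HasDerivAt Z (A s * Z s + B s * W s) s)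
    (hXs : ∀ s ∈ uIcc a b, IsUnit (X s).det)
    (hlag : ∀ s ∈ uIcc a b, ((X s)ᵀ * P s)ᵀ = (X s)ᵀ * P s)
    (hwr : ∀ s ∈ uIcc a b, (X s)ᵀ * W s - (P s)ᵀ * Z s = 1) :
    (of fun i j => ∫ s in a..b, ((X s)⁻¹ * B s * ((X s)ᵀ)⁻¹) i j) =
      (X b)⁻¹ * Z b - (X a)⁻¹ * Z a :=
  of_intervalIntegral_eq_sub_of_hasDerivAt
    (fun s hs => hasDerivAt_inv_mul_of_wronskian_eq_one (hX s hs) (hZ s hs) (hXs s hs)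
      (hlag s hs) (hwr s hs))
    (ContinuousOn.inv_mul_mul_transpose_inv (fun s hs => (hX s hs).continuousAt.continuousWithinAt)
      hB.continuousOn hXs)

theorem of_intervalIntegral_inv_mul_mul_transpose_inv_eq_sub_of_wronskian_eq_neg_one
    (hB : Continuous B)
    (hX : ∀ s ∈ uIcc a b, HasDerivAt X (A s * X s + B s * P s) s)
    (hZ : ∀ s ∈ uIcc a b, HasDerivAt Z (A s * Z s + B s * W s) s)
    (hXs : ∀ s ∈ uIcc a b, IsUnit (X s).det)
    (hlag : ∀ s ∈ uIcc a b, ((X s)ᵀ * P s)ᵀ = (X s)ᵀ * P s)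
    (hwr : ∀ s ∈ uIcc a b, (X s)ᵀ * W s - (P s)ᵀ * Z s = -1) :
    (of fun i j => ∫ s in a..b, ((X s)⁻¹ * B s * ((X s)ᵀ)⁻¹) i j) =
      (X a)⁻¹ * Z a - (X b)⁻¹ * Z b := by
  have hnegZ : ∀ s ∈ uIcc a b, HasDerivAt (-Z) (A s * (-Z) s + B s * (-W) s) s := fun s hs =>
    (hZ s hs).neg.congr_deriv (by simp only [Pi.neg_apply, Matrix.mul_neg, neg_add])
  have hnegwr : ∀ s ∈ uIcc a b, (X s)ᵀ * (-W) s - (P s)ᵀ * (-Z) s = 1 := fun s hs => by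
    rw [Pi.neg_apply, Pi.neg_apply, Matrix.mul_neg, Matrix.mul_neg, neg_sub_neg, ← neg_sub,
      hwr s hs, neg_neg]
  rw [of_intervalIntegral_inv_mul_mul_transpose_inv_eq_sub_of_wronskian_eq_one hB hX hnegZ hXs
    hlag hnegwr, Pi.neg_apply, Pi.neg_apply, Matrix.mul_neg, Matrix.mul_neg, neg_sub_neg]

theorem posDef_of_intervalIntegral_inv_mul_mul_transpose_inv (hab : a < b)
    (hB : Continuous B) (hBpos : ∀ s, (B s).PosDef) (hX : Continuous X)
    (hXs : ∀ s ∈ Icc a b, IsUnit (X s).det) :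
    (of fun i j => ∫ s in a..b, ((X s)⁻¹ * B s * ((X s)ᵀ)⁻¹) i j).PosDef :=
  posDef_of_intervalIntegral hab
    (hX.continuousOn.inv_mul_mul_transpose_inv hB.continuousOn hXs)
    fun s hs => (hBpos s).inv_mul_mul_transpose_inv (hXs s hs)

end Jacobi

theorem jacobi_green_bundle_identity_general
    (n : ℕ) (A B : ℝ → Matrix (Fin n) (Fin n) ℝ)
    (hBcont : ∀ i j, Continuous fun t => B t i j)
    (hBpos : ∀ t, (B t).PosDef)
    (H V Y U : ℝ → Matrix (Fin n) (Fin n) ℝ)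
    (hH : ∀ t, ∀ i j, HasDerivAt (fun s => H s i j)
      ((A t * H t + B t * V t) i j) t)
    (hY : ∀ t, ∀ i j, HasDerivAt (fun s => Y s i j)
      ((A t * Y t + B t * U t) i j) t)
    (hY0 : Y 0 = 0)
    (hdetH : ∀ t > (-1 : ℝ), (H t).det ≠ 0)
    (hdetY : ∀ t > (0 : ℝ), (Y t).det ≠ 0)
    (hLagH : ∀ t, ((H t)ᵀ * V t)ᵀ = (H t)ᵀ * V t)
    (hLagY : ∀ t, ((Y t)ᵀ * U t)ᵀ = (Y t)ᵀ * U t)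
    (hWr : ∀ t, (Y t)ᵀ * V t - (U t)ᵀ * H t = -1) :
    (∀ t > (0 : ℝ),
      (Matrix.of fun i j =>
          ∫ s in (0:ℝ)..t, ((H s)⁻¹ * B s * ((H s)ᵀ)⁻¹) i j) *
        ((Y 1)⁻¹ * H 1 -
          Matrix.of fun i j =>
            ∫ s in (1:ℝ)..t, ((Y s)⁻¹ * B s * ((Y s)ᵀ)⁻¹) i j) = 1) ∧
    (∀ s t : ℝ, 0 < s → s < t →
      ((Matrix.of fun i j => ∫ r in (1:ℝ)..t, ((Y r)⁻¹ * B r * ((Y r)ᵀ)⁻¹) i j) -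
        Matrix.of fun i j =>
          ∫ r in (1:ℝ)..s, ((Y r)⁻¹ * B r * ((Y r)ᵀ)⁻¹) i j).PosDef) ∧
    (∀ t > (0 : ℝ),
      ((Y 1)⁻¹ * H 1 -
        Matrix.of fun i j =>
          ∫ s in (1:ℝ)..t, ((Y s)⁻¹ * B s * ((Y s)ᵀ)⁻¹) i j).PosDef) ∧
    (∃ L : Matrix (Fin n) (Fin n) ℝ, ∀ i j,
      Tendsto (fun t => ∫ s in (1:ℝ)..t, ((Y s)⁻¹ * B s * ((Y s)ᵀ)⁻¹) i j)
        atTop (𝓝 (L i j))) := by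
  have hB : Continuous B := continuous_matrix hBcont
  have hH' : ∀ t, HasDerivAt H (A t * H t + B t * V t) t :=
    fun t => hasDerivAt_iff_forall_entry.2 (hH t)
  have hY' : ∀ t, HasDerivAt Y (A t * Y t + B t * U t) t :=
    fun t => hasDerivAt_iff_forall_entry.2 (hY t)
  have hWrH : ∀ t, (H t)ᵀ * U t - (V t)ᵀ * Y t = 1 := fun t => by
    simpa [transpose_sub, transpose_mul] using congrArg (fun M => -Mᵀ) (hWr t)
  have hΦ : ∀ t > (0 : ℝ), (of fun i j => ∫ s in (0:ℝ)..t, ((H s)⁻¹ * B s * ((H s)ᵀ)⁻¹) i j) =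
      (H t)⁻¹ * Y t := fun t ht => by
    simpa [hY0] using of_intervalIntegral_inv_mul_mul_transpose_inv_eq_sub_of_wronskian_eq_one
      (a := 0) hB (fun s _ => hH' s) (fun s _ => hY' s)
      (fun s hs => (hdetH s (neg_one_lt_zero.trans_le (le_min le_rfl ht.le |>.trans hs.1))).isUnit)
      (fun s _ => hLagH s) fun s _ => hWrH s
  have hΨ : ∀ s > (0 : ℝ), ∀ t > (0 : ℝ),
      (of fun i j => ∫ r in s..t, ((Y r)⁻¹ * B r * ((Y r)ᵀ)⁻¹) i j) =
        (Y s)⁻¹ * H s - (Y t)⁻¹ * H t := fun s hs t ht =>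
    of_intervalIntegral_inv_mul_mul_transpose_inv_eq_sub_of_wronskian_eq_neg_one hB
      (fun r _ => hY' r) (fun r _ => hH' r)
      (fun r hr => (hdetY r ((lt_min hs ht).trans_le hr.1)).isUnit) (fun r _ => hLagY r)
      fun r _ => hWr r
  have hΦΨ : ∀ t > (0 : ℝ), (H t)⁻¹ * Y t * ((Y t)⁻¹ * H t) = 1 := fun t ht => by
    rw [Matrix.mul_assoc, mul_nonsing_inv_cancel_left _ _ (hdetY t ht).isUnit,
      nonsing_inv_mul _ (hdetH t (by linarith)).isUnit]
  have hYcont : Continuous Y :=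
    continuous_matrix fun i j => continuous_iff_continuousAt.2 fun t => (hY t i j).continuousAt
  have hHcont : Continuous H :=
    continuous_matrix fun i j => continuous_iff_continuousAt.2 fun t => (hH t i j).continuousAt
  have hmono : ∀ s t : ℝ, 0 < s → s < t →
      ((of fun i j => ∫ r in (1:ℝ)..t, ((Y r)⁻¹ * B r * ((Y r)ᵀ)⁻¹) i j) -
        of fun i j => ∫ r in (1:ℝ)..s, ((Y r)⁻¹ * B r * ((Y r)ᵀ)⁻¹) i j).PosDef :=
    fun s t hs hst => by
      rw [hΨ 1 one_pos t (hs.trans hst), hΨ 1 one_pos s hs, sub_sub_sub_cancel_left,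
        ← hΨ s hs t (hs.trans hst)]
      exact posDef_of_intervalIntegral_inv_mul_mul_transpose_inv hst hB hBpos hYcont
        fun r hr => (hdetY r (hs.trans_le hr.1)).isUnit
  have hbound : ∀ t > (0 : ℝ), ((Y 1)⁻¹ * H 1 -
      of fun i j => ∫ s in (1:ℝ)..t, ((Y s)⁻¹ * B s * ((Y s)ᵀ)⁻¹) i j).PosDef := fun t ht => by
    rw [hΨ 1 one_pos t ht, sub_sub_cancel, ← inv_eq_right_inv (hΦΨ t ht), ← hΦ t ht]
    exact (posDef_of_intervalIntegral_inv_mul_mul_transpose_inv ht hB hBpos hHcont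
      fun s hs => (hdetH s (by linarith [hs.1])).isUnit).inv
  obtain ⟨L, hL⟩ := exists_tendsto_atTop_of_posDef_sub (t₀ := 0)
    (fun t ht => isHermitian_of_intervalIntegral fun s hs => ((hBpos s).inv_mul_mul_transpose_inv
      (hdetY s ((lt_min one_pos ht).trans_le hs.1)).isUnit).1) hmono hbound
  refine ⟨fun t ht => ?_, hmono, hbound, L, fun i j => tendsto_pi_nhds.1 (tendsto_pi_nhds.1 hL i) j⟩
  rw [hΨ 1 one_pos t ht, sub_sub_cancel, hΦ t ht, hΦΨ t ht]

/-- Key identity in the proof of Proposition (growth):  with `(H,V)`, `(Y,U)`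
matrix Jacobi solutions, `Y(0)=0`, `U(0)=I`, `H(-1)=0`, nondegenerate as stated,
Lagrangian images and Wronskian `Yᵀ V - Uᵀ H ≡ -I`, for all `t > 0` one has
`[∫₀ᵗ H⁻¹ B (Hᵀ)⁻¹ ds] · [D - ∫₁ᵗ Y⁻¹ B (Yᵀ)⁻¹ ds] = I` with `D = Y(1)⁻¹ H(1)`;
in particular the increasing family `∫₁ᵗ Y⁻¹ B (Yᵀ)⁻¹ ds` is bounded above by
`D` in the positive-definite order and converges as `t → +∞`. -/
theorem jacobi_green_bundle_identity
    (n : ℕ) (A B C : ℝ → Matrix (Fin n) (Fin n) ℝ)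
    (hBcont : ∀ i j, Continuous fun t => B t i j)
    (hBpos : ∀ t, (B t).PosDef) (hCsymm : ∀ t, (C t)ᵀ = C t)
    (H V Y U : ℝ → Matrix (Fin n) (Fin n) ℝ)
    (hH : ∀ t, ∀ i j, HasDerivAt (fun s => H s i j)
      ((A t * H t + B t * V t) i j) t)
    (hV : ∀ t, ∀ i j, HasDerivAt (fun s => V s i j)
      ((-(C t * H t) - (A t)ᵀ * V t) i j) t)
    (hY : ∀ t, ∀ i j, HasDerivAt (fun s => Y s i j)
      ((A t * Y t + B t * U t) i j) t)
    (hU : ∀ t, ∀ i j, HasDerivAt (fun s => U s i j)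
      ((-(C t * Y t) - (A t)ᵀ * U t) i j) t)
    (hY0 : Y 0 = 0) (hU0 : U 0 = 1) (hHm1 : H (-1) = 0)
    (hdetH : ∀ t > (-1 : ℝ), (H t).det ≠ 0)
    (hdetY : ∀ t > (0 : ℝ), (Y t).det ≠ 0)
    (hLagH : ∀ t, ((H t)ᵀ * V t)ᵀ = (H t)ᵀ * V t)
    (hLagY : ∀ t, ((Y t)ᵀ * U t)ᵀ = (Y t)ᵀ * U t)
    (hWr : ∀ t, (Y t)ᵀ * V t - (U t)ᵀ * H t = -1) :
    (∀ t > (0 : ℝ),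
      (Matrix.of fun i j =>
          ∫ s in (0:ℝ)..t, ((H s)⁻¹ * B s * ((H s)ᵀ)⁻¹) i j) *
        ((Y 1)⁻¹ * H 1 -
          Matrix.of fun i j =>
            ∫ s in (1:ℝ)..t, ((Y s)⁻¹ * B s * ((Y s)ᵀ)⁻¹) i j) = 1) ∧
    (∀ s t : ℝ, 0 < s → s < t →
      ((Matrix.of fun i j => ∫ r in (1:ℝ)..t, ((Y r)⁻¹ * B r * ((Y r)ᵀ)⁻¹) i j) -
        Matrix.of fun i j =>
          ∫ r in (1:ℝ)..s, ((Y r)⁻¹ * B r * ((Y r)ᵀ)⁻¹) i j).PosDef) ∧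
    (∀ t > (0 : ℝ),
      ((Y 1)⁻¹ * H 1 -
        Matrix.of fun i j =>
          ∫ s in (1:ℝ)..t, ((Y s)⁻¹ * B s * ((Y s)ᵀ)⁻¹) i j).PosDef) ∧
    (∃ L : Matrix (Fin n) (Fin n) ℝ, ∀ i j,
      Tendsto (fun t => ∫ s in (1:ℝ)..t, ((Y s)⁻¹ * B s * ((Y s)ᵀ)⁻¹) i j)
        atTop (𝓝 (L i j))) :=
  jacobi_green_bundle_identity_general n A B hBcont hBpos H V Y U hH hY hY0 hdetH hdetY hLagH hLagY
    hWr
end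

section
/- A quasi-hyperbolic continuous linear cocycle Ψ over a compact base 𝐁 is (uniformly) hyperbolic if and only if 𝐄(b) = E^s(b) + E^u(b) for every b ∈ 𝐁. -/
open Filter Topology

/-- A continuous linear cocycle (`ℝ`-action by bundle isomorphisms on the
trivial vector bundle `B × E`) over a continuous flow on `B`. -/
structure LinearCocycle (B E : Type*) [TopologicalSpace B]
    [NormedAddCommGroup E] [NormedSpace ℝ E] where
  flow : ℝ → B → B
  flow_cont : Continuous fun p : ℝ × B => flow p.1 p.2
  flow_zero : ∀ b, flow 0 b = b
  flow_add : ∀ s t b, flow s (flow t b) = flow (s + t) b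
  P : ℝ → B → E →L[ℝ] E
  P_cont : Continuous fun p : ℝ × B => P p.1 p.2
  P_zero : ∀ b, P 0 b = ContinuousLinearMap.id ℝ E
  P_comp : ∀ s t b, (P s (flow t b)).comp (P t b) = P (s + t) b

variable {B E : Type*} [TopologicalSpace B]
  [NormedAddCommGroup E] [NormedSpace ℝ E]

/-- Quasi-hyperbolicity: every nonzero vector has unbounded orbit. -/
def LinearCocycle.IsQuasiHyperbolic (Φ : LinearCocycle B E) : Prop :=
  ∀ b : B, ∀ v : E, v ≠ 0 → ∀ C : ℝ, ∃ t : ℝ, C < ‖Φ.P t b v‖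

/-- The subspace of vectors with bounded forward orbit. -/
def LinearCocycle.stable (Φ : LinearCocycle B E) (b : B) : Submodule ℝ E where
  carrier := {v | ∃ C : ℝ, ∀ t > (0:ℝ), ‖Φ.P t b v‖ ≤ C}
  add_mem' := by
    rintro u v ⟨C₁, h₁⟩ ⟨C₂, h₂⟩
    exact ⟨C₁ + C₂, fun t ht => by
      simpa [map_add] using (norm_add_le (Φ.P t b u) (Φ.P t b v)).trans
        (add_le_add (h₁ t ht) (h₂ t ht))⟩
  zero_mem' := ⟨0, fun t ht => by simp⟩
  smul_mem' := by
    rintro c v ⟨C, h⟩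
    exact ⟨‖c‖ * C, fun t ht => by
      rw [map_smul, norm_smul]
      exact mul_le_mul_of_nonneg_left (h t ht) (norm_nonneg c)⟩

/-- The subspace of vectors with bounded backward orbit. -/
def LinearCocycle.unstable (Φ : LinearCocycle B E) (b : B) : Submodule ℝ E where
  carrier := {v | ∃ C : ℝ, ∀ t > (0:ℝ), ‖Φ.P (-t) b v‖ ≤ C}
  add_mem' := by
    rintro u v ⟨C₁, h₁⟩ ⟨C₂, h₂⟩
    exact ⟨C₁ + C₂, fun t ht => by
      simpa [map_add] using (norm_add_le (Φ.P (-t) b u) (Φ.P (-t) b v)).trans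
        (add_le_add (h₁ t ht) (h₂ t ht))⟩
  zero_mem' := ⟨0, fun t ht => by simp⟩
  smul_mem' := by
    rintro c v ⟨C, h⟩
    exact ⟨‖c‖ * C, fun t ht => by
      rw [map_smul, norm_smul]
      exact mul_le_mul_of_nonneg_left (h t ht) (norm_nonneg c)⟩

/-- Uniform hyperbolicity of a linear cocycle over an invariant subset `Λ`. -/
def LinearCocycle.IsHyperbolicOn (Φ : LinearCocycle B E) (Λ : Set B) : Prop :=
  ∃ Es Eu : B → Submodule ℝ E,
    (∀ t : ℝ, ∀ b ∈ Λ, (Es b).map (Φ.P t b : E →ₗ[ℝ] E) = Es (Φ.flow t b)) ∧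
    (∀ t : ℝ, ∀ b ∈ Λ, (Eu b).map (Φ.P t b : E →ₗ[ℝ] E) = Eu (Φ.flow t b)) ∧
    (∀ b ∈ Λ, IsCompl (Es b) (Eu b)) ∧
    ∃ T > (0:ℝ), ∀ b ∈ Λ,
      (∀ v ∈ Es b, v ≠ 0 → ‖Φ.P T b v‖ < (1/2) * ‖v‖) ∧
      (∀ v ∈ Eu b, v ≠ 0 → ‖Φ.P (-T) b v‖ < (1/2) * ‖v‖)

/-!
If `Ψ` is hyperbolic, the contraction of `Ψ_T` on `E^s`, iterated and combined with the bound of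
`Ψ_s` for `s ∈ [0, T]`, shows `E^s(b) ⊆ stable b`; likewise `E^u(b) ⊆ unstable b`, so the two span.

Conversely, quasi-hyperbolicity forces `stable b ∩ unstable b = 0`, so `stable` and `unstable`
form an invariant splitting, and only the uniform contraction remains. Compactness of `B × S(E)`
upgrades quasi-hyperbolicity to a uniform escape time `T`: every `v ≠ 0` reaches norm `> C ‖v‖`
within time `|s| ≤ T`. Applied at an almost-maximal point of a stable orbit this bounds stable
orbits uniformly by `K ‖v‖`; applied with `C = 2K` at any time `t ≥ T`, it shows that the orbit
is already below `‖v‖ / 2`.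
-/

open Set

theorem Continuous.bddAbove_image_Ici_of_Ioi {f : ℝ → ℝ} (hf : Continuous f) {a : ℝ}
    (h : BddAbove (f '' Ioi a)) (c : ℝ) : BddAbove (f '' Ici c) := by
  refine (((isCompact_Icc (a := c) (b := a)).bddAbove_image hf.continuousOn).union h).mono ?_
  rw [← image_union]
  refine image_mono fun t (ht : c ≤ t) => ?_
  rcases le_or_gt t a with hta | hat
  · exact Or.inl ⟨ht, hta⟩
  · exact Or.inr hat

namespace LinearCocycle

variable (Φ : LinearCocycle B E)

theorem P_apply_P (s t : ℝ) (b : B) (v : E) :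
    Φ.P s (Φ.flow t b) (Φ.P t b v) = Φ.P (s + t) b v := by
  rw [← Φ.P_comp]
  rfl

theorem flow_neg_flow (t : ℝ) (b : B) : Φ.flow (-t) (Φ.flow t b) = b := by
  rw [Φ.flow_add, neg_add_cancel, Φ.flow_zero]

theorem P_P_neg (t : ℝ) (b : B) (v : E) : Φ.P t b (Φ.P (-t) (Φ.flow t b) v) = v := by
  have h := Φ.P_apply_P t (-t) (Φ.flow t b) v
  rwa [Φ.flow_neg_flow, add_neg_cancel, Φ.P_zero] at h

theorem continuous_orbit (b : B) (v : E) : Continuous fun t => Φ.P t b v :=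
  (Φ.P_cont.comp (continuous_id.prodMk continuous_const)).clm_apply continuous_const

theorem continuous_P_apply (s : ℝ) : Continuous fun q : B × E => Φ.P s q.1 q.2 :=
  (Φ.P_cont.comp ((continuous_const.prodMk continuous_id).comp continuous_fst)).clm_apply
    continuous_snd

theorem exists_norm_P_le [CompactSpace B] (r : ℝ) :
    ∃ L > 0, ∀ s, |s| ≤ r → ∀ b v, ‖Φ.P s b v‖ ≤ L * ‖v‖ := by
  obtain ⟨C, hC⟩ := ((isCompact_Icc (a := -r) (b := r)).prod isCompact_univ)
    |>.exists_bound_of_continuousOn Φ.P_cont.continuousOn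
  refine ⟨max C 1, by positivity, fun s hs b => (Φ.P s b).le_of_opNorm_le ?_⟩
  exact (hC (s, b) ⟨abs_le.mp hs, trivial⟩).trans (le_max_left _ _)

theorem mem_stable_iff_bddAbove {b : B} {v : E} (a : ℝ) :
    v ∈ Φ.stable b ↔ BddAbove ((fun t => ‖Φ.P t b v‖) '' Ici a) := by
  have hf := (Φ.continuous_orbit b v).norm
  refine ⟨fun ⟨C, hC⟩ => hf.bddAbove_image_Ici_of_Ioi ⟨C, forall_mem_image.2 hC⟩ a,
    fun h => ?_⟩
  obtain ⟨C, hC⟩ := hf.bddAbove_image_Ici_of_Ioi (h.mono (image_mono Ioi_subset_Ici_self)) 0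
  exact ⟨C, fun t ht => hC (mem_image_of_mem _ (mem_Ici.2 ht.le))⟩

theorem P_mem_stable {b : B} {v : E} (hv : v ∈ Φ.stable b) (t : ℝ) :
    Φ.P t b v ∈ Φ.stable (Φ.flow t b) := by
  rw [Φ.mem_stable_iff_bddAbove 0] at hv
  rw [Φ.mem_stable_iff_bddAbove (-t)]
  refine hv.mono ?_
  rintro _ ⟨s, hs : -t ≤ s, rfl⟩
  exact ⟨s + t, neg_le_iff_add_nonneg.1 hs, by simp only [Φ.P_apply_P]⟩

theorem map_stable (t : ℝ) (b : B) :
    (Φ.stable b).map (Φ.P t b : E →ₗ[ℝ] E) = Φ.stable (Φ.flow t b) := by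
  refine le_antisymm (Submodule.map_le_iff_le_comap.2 fun v hv => Φ.P_mem_stable hv t)
    fun w hw => ⟨Φ.P (-t) (Φ.flow t b) w, ?_, Φ.P_P_neg t b w⟩
  have h := Φ.P_mem_stable hw (-t)
  rwa [Φ.flow_neg_flow] at h

def reverse : LinearCocycle B E where
  flow t b := Φ.flow (-t) b
  flow_cont := Φ.flow_cont.comp (continuous_fst.neg.prodMk continuous_snd)
  flow_zero b := by rw [neg_zero, Φ.flow_zero]
  flow_add s t b := by rw [Φ.flow_add, neg_add]
  P t b := Φ.P (-t) b
  P_cont := Φ.P_cont.comp (continuous_fst.neg.prodMk continuous_snd)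
  P_zero b := by rw [neg_zero, Φ.P_zero]
  P_comp s t b := by rw [Φ.P_comp, neg_add]

@[simp] theorem reverse_P (t : ℝ) (b : B) : Φ.reverse.P t b = Φ.P (-t) b := rfl

@[simp] theorem reverse_flow (t : ℝ) (b : B) : Φ.reverse.flow t b = Φ.flow (-t) b := rfl

@[simp] theorem reverse_stable (b : B) : Φ.reverse.stable b = Φ.unstable b := rfl

theorem map_unstable (t : ℝ) (b : B) :
    (Φ.unstable b).map (Φ.P t b : E →ₗ[ℝ] E) = Φ.unstable (Φ.flow t b) := by
  simpa only [reverse_P, reverse_flow, reverse_stable, neg_neg] using Φ.reverse.map_stable (-t) b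

theorem le_stable_of_norm_P_le [CompactSpace B] (F : B → Submodule ℝ E) {T : ℝ} (hT : 0 < T)
    (hF : ∀ b, ∀ v ∈ F b, Φ.P T b v ∈ F (Φ.flow T b))
    (hle : ∀ b, ∀ v ∈ F b, ‖Φ.P T b v‖ ≤ ‖v‖) (b : B) : F b ≤ Φ.stable b := by
  have hiter : ∀ k : ℕ, ∀ b, ∀ v ∈ F b, ‖Φ.P (k * T) b v‖ ≤ ‖v‖ := by
    intro k
    induction k with
    | zero => intro b v _; simp [Φ.P_zero]
    | succ k ih =>
      intro b v hv
      calc ‖Φ.P ((k + 1 : ℕ) * T) b v‖ = ‖Φ.P (k * T) (Φ.flow T b) (Φ.P T b v)‖ := by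
            rw [Φ.P_apply_P]; push_cast; ring_nf
        _ ≤ ‖Φ.P T b v‖ := ih _ _ (hF b v hv)
        _ ≤ ‖v‖ := hle b v hv
  obtain ⟨L, hL, hPL⟩ := Φ.exists_norm_P_le T
  intro v hv
  refine (Φ.mem_stable_iff_bddAbove 0).2 ⟨L * ‖v‖, forall_mem_image.2 fun t (ht : 0 ≤ t) => ?_⟩
  set k := ⌊t / T⌋₊
  have hkt : k * T ≤ t := (le_div_iff₀ hT).1 (Nat.floor_le (by positivity))
  have htk : t < (k + 1) * T := (div_lt_iff₀ hT).1 (Nat.lt_floor_add_one _)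
  calc ‖Φ.P t b v‖ = ‖Φ.P (t - k * T) (Φ.flow (k * T) b) (Φ.P (k * T) b v)‖ := by
        rw [Φ.P_apply_P, sub_add_cancel]
    _ ≤ L * ‖Φ.P (k * T) b v‖ := hPL _ (abs_le.2 ⟨by linarith, by linarith⟩) _ _
    _ ≤ L * ‖v‖ := mul_le_mul_of_nonneg_left (hiter k b v hv) hL.le

namespace IsHyperbolicOn

variable {Φ}

theorem sup_stable_unstable_eq_top [CompactSpace B] (h : Φ.IsHyperbolicOn univ) (b : B) :
    Φ.stable b ⊔ Φ.unstable b = ⊤ := by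
  obtain ⟨Es, Eu, hs, hu, hcompl, T, hT, hcontr⟩ := h
  have nonexpanding : ∀ {F : B → Submodule ℝ E} {f : B → E →L[ℝ] E},
      (∀ c, ∀ v ∈ F c, v ≠ 0 → ‖f c v‖ < 1 / 2 * ‖v‖) → ∀ c, ∀ v ∈ F c, ‖f c v‖ ≤ ‖v‖ := by
    intro F f hf c v hv
    rcases eq_or_ne v 0 with rfl | hv0
    · simp
    · linarith [hf c v hv hv0, norm_nonneg v]
  have hEs : Es b ≤ Φ.stable b :=
    Φ.le_stable_of_norm_P_le Es hT
      (fun c v hv => hs T c trivial ▸ Submodule.mem_map_of_mem hv)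
      (nonexpanding fun c => (hcontr c trivial).1) b
  have hEu : Eu b ≤ Φ.unstable b :=
    Φ.reverse.le_stable_of_norm_P_le Eu hT
      (fun c v hv => hu (-T) c trivial ▸ Submodule.mem_map_of_mem hv)
      (nonexpanding fun c => (hcontr c trivial).2) b
  exact top_unique ((hcompl b trivial).sup_eq_top.ge.trans (sup_le_sup hEs hEu))

end IsHyperbolicOn

namespace IsQuasiHyperbolic

variable {Φ}

theorem eq_zero_of_forall_norm_le (hqh : Φ.IsQuasiHyperbolic) {b : B} {v : E} {C : ℝ}
    (h : ∀ t, ‖Φ.P t b v‖ ≤ C) : v = 0 := by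
  by_contra hv
  obtain ⟨t, ht⟩ := hqh b v hv C
  exact (h t).not_gt ht

theorem reverse (hqh : Φ.IsQuasiHyperbolic) : Φ.reverse.IsQuasiHyperbolic := fun b v hv C =>
  let ⟨t, ht⟩ := hqh b v hv C
  ⟨-t, by simpa using ht⟩

theorem disjoint_stable_unstable (hqh : Φ.IsQuasiHyperbolic) (b : B) :
    Disjoint (Φ.stable b) (Φ.unstable b) := by
  rw [Submodule.disjoint_def]
  rintro v ⟨C₁, h₁⟩ ⟨C₂, h₂⟩
  refine hqh.eq_zero_of_forall_norm_le (b := b) (C := max (max C₁ C₂) ‖v‖) fun t => ?_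
  rcases lt_trichotomy t 0 with ht | rfl | ht
  · exact le_max_of_le_left (le_max_of_le_right (by simpa using h₂ (-t) (neg_pos.2 ht)))
  · simp [Φ.P_zero]
  · exact le_max_of_le_left (le_max_of_le_left (h₁ t ht))

variable [CompactSpace B] [FiniteDimensional ℝ E]

theorem exists_escapeTime_of_norm_eq_one (hqh : Φ.IsQuasiHyperbolic) (C : ℝ) :
    ∃ T > 0, ∀ b v, ‖v‖ = 1 → ∃ s, |s| ≤ T ∧ C < ‖Φ.P s b v‖ := by
  by_contra! h
  choose b v hv hC using fun n : ℕ => h (n + 1) n.cast_add_one_pos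
  obtain ⟨⟨b₀, v₀⟩, ⟨-, hv₀⟩, hcl⟩ :=
    (isCompact_univ.prod (isCompact_sphere (0 : E) 1)).exists_mapClusterPt_of_frequently
      (l := atTop) (f := fun n => (b n, v n))
      (Frequently.of_forall fun n => ⟨trivial, mem_sphere_zero_iff_norm.2 (hv n)⟩)
  have hbdd : ∀ s, ‖Φ.P s b₀ v₀‖ ≤ C := fun s =>
    (isClosed_le (Φ.continuous_P_apply s).norm continuous_const).mem_of_mapClusterPt hcl
      (eventually_atTop.2 ⟨⌈|s|⌉₊, fun n hn => hC n s <| by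
        have := (Nat.le_ceil |s|).trans (Nat.cast_le.2 hn)
        linarith⟩)
  simp [hqh.eq_zero_of_forall_norm_le hbdd] at hv₀

theorem exists_escapeTime (hqh : Φ.IsQuasiHyperbolic) (C : ℝ) :
    ∃ T > 0, ∀ b v, v ≠ 0 → ∃ s, |s| ≤ T ∧ C * ‖v‖ < ‖Φ.P s b v‖ := by
  obtain ⟨T, hT, hesc⟩ := hqh.exists_escapeTime_of_norm_eq_one C
  refine ⟨T, hT, fun b v hv => ?_⟩
  obtain ⟨s, hs, hlt⟩ := hesc b (‖v‖⁻¹ • v) (norm_smul_inv_norm hv)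
  refine ⟨s, hs, ?_⟩
  rwa [map_smul, norm_smul, norm_inv, norm_norm, lt_inv_mul_iff₀ (norm_pos_iff.2 hv),
    mul_comm] at hlt

theorem exists_norm_P_le_of_mem_stable (hqh : Φ.IsQuasiHyperbolic) :
    ∃ K > 0, ∀ b, ∀ v ∈ Φ.stable b, ∀ t ≥ 0, ‖Φ.P t b v‖ ≤ K * ‖v‖ := by
  obtain ⟨T, -, hesc⟩ := hqh.exists_escapeTime 2
  obtain ⟨L, hL, hPL⟩ := Φ.exists_norm_P_le T
  refine ⟨2 * L, by positivity, fun b v hv t ht => ?_⟩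
  set S := (fun t => ‖Φ.P t b v‖) '' Ici 0
  have hS : BddAbove S := (Φ.mem_stable_iff_bddAbove 0).1 hv
  by_contra! hgt
  have hσ : 2 * L * ‖v‖ < sSup S := hgt.trans_le (le_csSup hS ⟨t, ht, rfl⟩)
  have hσ₀ : 0 < sSup S := lt_of_le_of_lt (by positivity) hσ
  obtain ⟨_, ⟨r, hr : 0 ≤ r, rfl⟩, hpeak : sSup S / 2 < ‖Φ.P r b v‖⟩ :=
    exists_lt_of_lt_csSup (s := S) ⟨_, t, ht, rfl⟩ (half_lt_self hσ₀)
  have hTr : T < r := by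
    by_contra! hrT
    linarith [hPL r (abs_le.2 ⟨by linarith, hrT⟩) b v]
  have hw : Φ.P r b v ≠ 0 := norm_pos_iff.1 ((half_pos hσ₀).trans hpeak)
  obtain ⟨s, hs, hlt⟩ := hesc (Φ.flow r b) _ hw
  rw [Φ.P_apply_P] at hlt
  have : ‖Φ.P (s + r) b v‖ ≤ sSup S :=
    le_csSup hS ⟨s + r, mem_Ici.2 (by linarith [(abs_le.1 hs).1]), rfl⟩
  linarith

theorem exists_norm_P_lt_half_of_mem_stable (hqh : Φ.IsQuasiHyperbolic) :
    ∃ T > 0, ∀ b, ∀ v ∈ Φ.stable b, v ≠ 0 → ∀ t ≥ T, ‖Φ.P t b v‖ < 1 / 2 * ‖v‖ := by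
  obtain ⟨K, hK, hbound⟩ := hqh.exists_norm_P_le_of_mem_stable
  obtain ⟨T, hT, hesc⟩ := hqh.exists_escapeTime (2 * K)
  refine ⟨T, hT, fun b v hv hv0 t ht => ?_⟩
  rcases eq_or_ne (Φ.P t b v) 0 with hw | hw
  · simpa [hw] using hv0
  obtain ⟨s, hs, hlt⟩ := hesc (Φ.flow t b) _ hw
  rw [Φ.P_apply_P] at hlt
  have hle := hbound b v hv (s + t) (by linarith [(abs_le.1 hs).1])
  have : 2 * K * ‖Φ.P t b v‖ < 2 * K * (1 / 2 * ‖v‖) := by linarith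
  exact lt_of_mul_lt_mul_left this (by positivity)

theorem isHyperbolicOn_univ (hqh : Φ.IsQuasiHyperbolic)
    (h : ∀ b, Φ.stable b ⊔ Φ.unstable b = ⊤) : Φ.IsHyperbolicOn univ := by
  obtain ⟨Ts, hTs, hs⟩ := hqh.exists_norm_P_lt_half_of_mem_stable
  obtain ⟨Tu, -, hu⟩ := hqh.reverse.exists_norm_P_lt_half_of_mem_stable
  refine ⟨Φ.stable, Φ.unstable, fun t b _ => Φ.map_stable t b, fun t b _ => Φ.map_unstable t b,
    fun b _ => ⟨hqh.disjoint_stable_unstable b, codisjoint_iff.2 (h b)⟩,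
    max Ts Tu, lt_max_of_lt_left hTs, fun b _ => ⟨?_, ?_⟩⟩
  · exact fun v hv hv0 => hs b v hv hv0 _ (le_max_left _ _)
  · exact fun v hv hv0 => hu b v hv hv0 _ (le_max_right _ _)

end IsQuasiHyperbolic

end LinearCocycle

/-- A quasi-hyperbolic continuous linear cocycle over a compact base is
hyperbolic if and only if `𝐄(b) = E^s(b) + E^u(b)` for every `b`. -/
theorem quasi_hyperbolic_iff_splitting
    [CompactSpace B] [FiniteDimensional ℝ E]
    (Φ : LinearCocycle B E) (hqh : Φ.IsQuasiHyperbolic) :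
    Φ.IsHyperbolicOn Set.univ ↔
      ∀ b : B, Φ.stable b ⊔ Φ.unstable b = ⊤ :=
  ⟨fun h => h.sup_stable_unstable_eq_top, hqh.isHyperbolicOn_univ⟩
end
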